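/- arXiv:2504.18335 — 2 statements merged into one kernel-verified Lean document; each statement's English description precedes it below -/
import Mathlib

section
/- Fix p ∈ {0,…,h̄−1} satisfying p < δ, or δ ≤ p < h̄ − δ, or p > max{δ, h̄ − δ}, and let Q_p ⊆ {0,…,h̄−1} be {p+1,…,p+h̄−δ} in the first case, {δ−1,…,p−1} ∪ {p+1,…,h̄−1} in the second case, and {p−h̄+δ,…,p−1} in the third case. Let σ, σ' : {0,…,L−1} × {0,…,s̄^n̄ − 1} → 𝔽 be two functions such that σ((p+x) mod L, a) = σ'((p+x) mod L, a) for every x ∈ {0,…,s̄−1} and every a, and H_q[σ](a) = H_q[σ'](a) for every q ∈ Q_p and every a. Then σ = σ'. -/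
/-- Replace the `i`-th digit of the `s`-ary expansion of `a` by `x`
(the paper's notation `a(i, x)`). -/
def replaceDigit (s a i x : ℕ) : ℕ := a - a / s ^ i % s * s ^ i + x * s ^ i

/-- The combined symbol `H_q[σ](a)` of the abstract cooperative-phase lemma:
`∑_{x=0}^{sbar−1} σ((q+x) mod L, a(i_q, a_{i_q} ⊕ x))`, where `iF q` is the rack index
`i_q` and `⊕` is addition modulo `sbar`. -/
def Hq {𝔽 : Type*} [Field 𝔽] (sbar L : ℕ) (iF : ℕ → ℕ) (q : ℕ)
    (σ : ℕ → ℕ → 𝔽) (a : ℕ) : 𝔽 :=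
  ∑ x ∈ Finset.range sbar,
    σ ((q + x) % L)
      (replaceDigit sbar a (iF q) ((a / sbar ^ (iF q) % sbar + x) % sbar))


lemma digit_decomp (s a i : ℕ) :
    a = a / s ^ (i+1) * s ^ (i+1) + a / s ^ i % s * s ^ i + a % s ^ i := by
  have h1 := Nat.div_add_mod a (s ^ i)
  have h2 := Nat.div_add_mod (a / s ^ i) s
  have h3 : a / s ^ i / s = a / s ^ (i+1) := by
    rw [Nat.div_div_eq_div_mul, ← pow_succ]
  rw [h3] at h2
  calc a = s ^ i * (a / s ^ i) + a % s ^ i := h1.symm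
  _ = s ^ i * (s * (a / s ^ (i+1)) + a / s ^ i % s) + a % s ^ i := by rw [h2]
  _ = a / s ^ (i+1) * s ^ (i+1) + a / s ^ i % s * s ^ i + a % s ^ i := by
      rw [pow_succ]; ring

lemma rd_decomp (s a i x : ℕ) :
    replaceDigit s a i x = a / s ^ (i+1) * s ^ (i+1) + x * s ^ i + a % s ^ i := by
  have key := digit_decomp s a i
  unfold replaceDigit
  generalize a / s ^ (i+1) * s ^ (i+1) = A at *
  generalize a / s ^ i % s * s ^ i = B at *
  generalize x * s ^ i = X at *
  generalize a % s ^ i = C at *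
  omega

lemma rd_small (s a i x : ℕ) (hs : 0 < s) (hx : x < s) :
    x * s ^ i + a % s ^ i < s ^ (i+1) := by
  have h1 : a % s ^ i < s ^ i := Nat.mod_lt _ (pow_pos hs i)
  have h2 : (x + 1) * s ^ i ≤ s * s ^ i := Nat.mul_le_mul_right _ (by omega)
  have h3 : x * s ^ i + a % s ^ i < (x + 1) * s ^ i := by
    rw [add_one_mul]; exact Nat.add_lt_add_left h1 _
  calc x * s ^ i + a % s ^ i < (x + 1) * s ^ i := h3
  _ ≤ s * s ^ i := h2
  _ = s ^ (i+1) := by rw [pow_succ]; ring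

lemma rd_lt (s n a i x : ℕ) (hs : 0 < s) (ha : a < s ^ n) (hi : i < n) (hx : x < s) :
    replaceDigit s a i x < s ^ n := by
  have h2 : a / s ^ (i+1) < s ^ (n - (i+1)) := by
    apply Nat.div_lt_of_lt_mul
    rw [← pow_add, show (i+1) + (n - (i+1)) = n from by omega]
    exact ha
  have h3 := rd_small s a i x hs hx
  have h4 : replaceDigit s a i x < (a / s ^ (i+1) + 1) * s ^ (i+1) := by
    rw [rd_decomp, add_one_mul, add_assoc]
    exact Nat.add_lt_add_left h3 _
  have h5 : (a / s ^ (i+1) + 1) * s ^ (i+1) ≤ s ^ (n - (i+1)) * s ^ (i+1) :=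
    Nat.mul_le_mul_right _ h2
  have h6 : s ^ (n - (i+1)) * s ^ (i+1) = s ^ n := by
    rw [← pow_add]; congr 1; omega
  exact lt_of_lt_of_le h4 (h5.trans_eq h6)

lemma digit_rd (s a i x : ℕ) (hs : 0 < s) (hx : x < s) :
    replaceDigit s a i x / s ^ i % s = x := by
  have hpow : 0 < s ^ i := pow_pos hs i
  have h0 : replaceDigit s a i x = a % s ^ i + (a / s ^ (i+1) * s + x) * s ^ i := by
    rw [rd_decomp, pow_succ]; ring
  rw [h0, Nat.add_mul_div_right _ _ hpow, Nat.div_eq_of_lt (Nat.mod_lt _ hpow), zero_add,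
    mul_comm, Nat.mul_add_mod]
  exact Nat.mod_eq_of_lt hx

lemma rd_rd (s a i x y : ℕ) (hs : 0 < s) (hx : x < s) :
    replaceDigit s (replaceDigit s a i x) i y = replaceDigit s a i y := by
  have hd1 : replaceDigit s a i x / s ^ (i+1) = a / s ^ (i+1) := by
    have h0 : replaceDigit s a i x
        = (x * s ^ i + a % s ^ i) + a / s ^ (i+1) * s ^ (i+1) := by
      rw [rd_decomp]; ring
    rw [h0, Nat.add_mul_div_right _ _ (pow_pos hs _),
      Nat.div_eq_of_lt (rd_small s a i x hs hx), zero_add]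
  have hm1 : replaceDigit s a i x % s ^ i = a % s ^ i := by
    have h0 : replaceDigit s a i x
        = a % s ^ i + (a / s ^ (i+1) * s + x) * s ^ i := by
      rw [rd_decomp, pow_succ]; ring
    rw [h0, Nat.add_mul_mod_self_right, Nat.mod_mod_of_dvd _ dvd_rfl]
  rw [rd_decomp s (replaceDigit s a i x) i y, hd1, hm1, ← rd_decomp]

lemma rd_self (s a i : ℕ) :
    replaceDigit s a i (a / s ^ i % s) = a := by
  rw [rd_decomp]
  exact (digit_decomp s a i).symm

lemma exists_offset (L p y : ℕ) (hL0 : 0 < L) (hy : y < L) :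
    ∃ t, t < L ∧ (p + t) % L = y := by
  have hr : p % L < L := Nat.mod_lt _ hL0
  have key : ∀ r, r < L → ∃ t, t < L ∧ (r + t) % L = y := by
    intro r hrL
    rcases le_or_gt r y with h | h
    · exact ⟨y - r, by omega, by rw [Nat.add_sub_cancel' h]; exact Nat.mod_eq_of_lt hy⟩
    · refine ⟨y + L - r, by omega, ?_⟩
      rw [show r + (y + L - r) = y + L from by omega, Nat.add_mod_right]
      exact Nat.mod_eq_of_lt hy
  obtain ⟨t, ht, hmod⟩ := key (p % L) hr
  exact ⟨t, ht, by rw [← Nat.mod_add_mod, hmod]⟩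

lemma key_step {𝔽 : Type*} [Field 𝔽] (nbar sbar L : ℕ) (hsbar : 0 < sbar)
    (iF : ℕ → ℕ) (q : ℕ) (hi : iF q < nbar) (σ σ' : ℕ → ℕ → 𝔽)
    (hH : ∀ a < sbar ^ nbar, Hq sbar L iF q σ a = Hq sbar L iF q σ' a)
    (x0 : ℕ) (hx0 : x0 < sbar)
    (hknown : ∀ x < sbar, x ≠ x0 →
      ∀ a < sbar ^ nbar, σ ((q + x) % L) a = σ' ((q + x) % L) a) :
    ∀ b < sbar ^ nbar, σ ((q + x0) % L) b = σ' ((q + x0) % L) b := by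
  intro b hb
  have hd : b / sbar ^ (iF q) % sbar < sbar := Nat.mod_lt _ hsbar
  have he : (b / sbar ^ (iF q) % sbar + (sbar - x0)) % sbar < sbar := Nat.mod_lt _ hsbar
  set e := (b / sbar ^ (iF q) % sbar + (sbar - x0)) % sbar with he_def
  set a := replaceDigit sbar b (iF q) e with ha_def
  have ha : a < sbar ^ nbar := rd_lt sbar nbar b (iF q) e hsbar hb hi he
  have hdig : a / sbar ^ (iF q) % sbar = e := digit_rd sbar b (iF q) e hsbar he
  have hsum := hH a ha
  unfold Hq at hsum
  rw [hdig] at hsum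
  have hx0mem : x0 ∈ Finset.range sbar := Finset.mem_range.mpr hx0
  have h1 := Finset.add_sum_erase (Finset.range sbar)
    (fun x => σ ((q + x) % L) (replaceDigit sbar a (iF q) ((e + x) % sbar))) hx0mem
  have h2 := Finset.add_sum_erase (Finset.range sbar)
    (fun x => σ' ((q + x) % L) (replaceDigit sbar a (iF q) ((e + x) % sbar))) hx0mem
  have h3 : ∑ x ∈ (Finset.range sbar).erase x0,
        σ ((q + x) % L) (replaceDigit sbar a (iF q) ((e + x) % sbar))
      = ∑ x ∈ (Finset.range sbar).erase x0,
        σ' ((q + x) % L) (replaceDigit sbar a (iF q) ((e + x) % sbar)) := by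
    refine Finset.sum_congr rfl ?_
    intro x hx
    have hxne := (Finset.mem_erase.mp hx).1
    have hxlt := Finset.mem_range.mp (Finset.mem_erase.mp hx).2
    exact hknown x hxlt hxne _
      (rd_lt sbar nbar a (iF q) _ hsbar ha hi (Nat.mod_lt _ hsbar))
  have h4 : σ ((q + x0) % L) (replaceDigit sbar a (iF q) ((e + x0) % sbar))
      = σ' ((q + x0) % L) (replaceDigit sbar a (iF q) ((e + x0) % sbar)) := by
    have h5 := h1.trans (hsum.trans h2.symm)
    rw [h3] at h5
    exact add_right_cancel h5
  have harg : replaceDigit sbar a (iF q) ((e + x0) % sbar) = b := by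
    have hex : (e + x0) % sbar = b / sbar ^ (iF q) % sbar := by
      rw [he_def, Nat.mod_add_mod,
        show b / sbar ^ (iF q) % sbar + (sbar - x0) + x0
          = b / sbar ^ (iF q) % sbar + sbar from by omega,
        Nat.add_mod_right]
      exact Nat.mod_eq_of_lt hd
    rw [hex, ha_def, rd_rd sbar b (iF q) e _ hsbar he, rd_self]
  rw [harg] at h4
  exact h4

/-- **Abstract form of Lemma 2 of the paper** (the cooperative phase): a host rack that
knows the `sbar` consecutive layers `σ(p,·), …, σ(p+sbar−1,·)` and the combined symbols
`H_q[σ](a)` for the `hbar − δ` host racks `q ∈ Q_p` recovers all `L = sbar + hbar − δ`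
layers, i.e. `σ` is determined. -/
theorem stmt13 {𝔽 : Type*} [Field 𝔽]
    (nbar sbar hbar δ L : ℕ)
    (hnbar : 0 < nbar) (hsbar : 0 < sbar)
    (hδ1 : 1 ≤ δ) (hδ2 : δ ≤ hbar - 1) (hL : L = sbar + hbar - δ)
    -- the distinct host-rack indices `i₀, i₁, …, i_{hbar−1}` in `{0,…,nbar−1}`
    (iF : ℕ → ℕ) (hinj : Set.InjOn iF (Set.Iio hbar)) (hiFn : ∀ q < hbar, iF q < nbar)
    (p : ℕ) (hp : p < hbar) (Q : Finset ℕ)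
    (hQ : (p < δ ∧ Q = Finset.Icc (p + 1) (p + hbar - δ))
      ∨ (δ ≤ p ∧ p < hbar - δ ∧
          Q = Finset.Icc (δ - 1) (p - 1) ∪ Finset.Icc (p + 1) (hbar - 1))
      ∨ (max δ (hbar - δ) < p ∧ Q = Finset.Icc (p + δ - hbar) (p - 1)))
    (σ σ' : ℕ → ℕ → 𝔽)
    (hdown : ∀ x < sbar, ∀ a < sbar ^ nbar, σ ((p + x) % L) a = σ' ((p + x) % L) a)
    (hcoop : ∀ q ∈ Q, ∀ a < sbar ^ nbar, Hq sbar L iF q σ a = Hq sbar L iF q σ' a) :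
    ∀ y < L, ∀ a < sbar ^ nbar, σ y a = σ' y a := by
  have hL0 : 0 < L := by omega
  have key : ∀ q ∈ Q, q < hbar → ∀ x0 < sbar,
      (∀ x < sbar, x ≠ x0 → ∀ a < sbar ^ nbar, σ ((q + x) % L) a = σ' ((q + x) % L) a) →
      ∀ b < sbar ^ nbar, σ ((q + x0) % L) b = σ' ((q + x0) % L) b := by
    intro q hqQ hqh x0 hx0 hknown
    exact key_step nbar sbar L hsbar iF q (hiFn q hqh) σ σ' (hcoop q hqQ) x0 hx0 hknown
  have forward : ∀ J, (∀ j, 1 ≤ j → j ≤ J → p + j ∈ Q ∧ p + j < hbar) →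
      ∀ j ≤ J, ∀ t < sbar + j,
        ∀ a < sbar ^ nbar, σ ((p + t) % L) a = σ' ((p + t) % L) a := by
    intro J hmem j
    induction j with
    | zero => intro _ t ht a ha; exact hdown t (by omega) a ha
    | succ j ih =>
      intro hj t ht a ha
      rcases Nat.lt_or_ge t (sbar + j) with h | h
      · exact ih (by omega) t h a ha
      · have htj : t = sbar + j := by omega
        obtain ⟨hmemQ, hlt⟩ := hmem (j+1) (by omega) hj
        have known : ∀ x < sbar, x ≠ sbar - 1 → ∀ b < sbar ^ nbar,
            σ ((p + (j+1) + x) % L) b = σ' ((p + (j+1) + x) % L) b := by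
          intro x hx hne b hbn
          rw [show p + (j+1) + x = p + (j + 1 + x) from by omega]
          exact ih (by omega) (j+1+x) (by omega) b hbn
        have hk := key (p + (j+1)) hmemQ hlt (sbar - 1) (by omega) known
        rw [← show p + (j+1) + (sbar - 1) = p + t from by omega]
        exact hk a ha
  have backward : ∀ (B K : ℕ), sbar ≤ B → K ≤ p → K < L →
      (∀ k, 1 ≤ k → k ≤ K → p - k ∈ Q) →
      (∀ t < B, ∀ a < sbar ^ nbar, σ ((p + t) % L) a = σ' ((p + t) % L) a) →
      ∀ k ≤ K, ∀ t, (t < B ∨ (L - k ≤ t ∧ t < L)) →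
        ∀ a < sbar ^ nbar, σ ((p + t) % L) a = σ' ((p + t) % L) a := by
    intro B K hB hKp hKL hmem hbase k
    induction k with
    | zero =>
      intro _ t ht a ha
      rcases ht with h | h
      · exact hbase t h a ha
      · exact absurd h (by omega)
    | succ k ih =>
      intro hk t ht a ha
      by_cases hcase : t < B ∨ (L - k ≤ t ∧ t < L)
      · exact ih (by omega) t hcase a ha
      · have htk : t = L - (k+1) := by omega
        have hq : p - (k+1) ∈ Q := hmem (k+1) (by omega) hk
        have hqlt : p - (k+1) < hbar := by omega
        have known : ∀ x < sbar, x ≠ 0 → ∀ b < sbar ^ nbar,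
            σ ((p - (k+1) + x) % L) b = σ' ((p - (k+1) + x) % L) b := by
          intro x hx hxne b hbn
          rcases Nat.lt_or_ge x (k+1) with hxk | hxk
          · have hmod : (p - (k+1) + x) % L = (p + (L - (k+1-x))) % L := by
              rw [show p + (L - (k+1-x)) = p - (k+1) + x + L from by omega,
                Nat.add_mod_right]
            rw [hmod]
            exact ih (by omega) (L - (k+1-x)) (Or.inr ⟨by omega, by omega⟩) b hbn
          · rw [show p - (k+1) + x = p + (x - (k+1)) from by omega]
            exact ih (by omega) (x - (k+1)) (Or.inl (by omega)) b hbn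
        have hk2 := key (p - (k+1)) hq hqlt 0 hsbar known
        have hmod : (p + t) % L = (p - (k+1) + 0) % L := by
          rw [show p + t = (p - (k+1) + 0) + L from by omega, Nat.add_mod_right]
        rw [hmod]
        exact hk2 a ha
  have all : ∀ t < L, ∀ a < sbar ^ nbar, σ ((p + t) % L) a = σ' ((p + t) % L) a := by
    rcases hQ with ⟨hpδ, hQe⟩ | ⟨hδp, hph, hQe⟩ | ⟨hpm, hQe⟩
    · intro t ht a ha
      have hmem : ∀ j, 1 ≤ j → j ≤ hbar - δ → p + j ∈ Q ∧ p + j < hbar := by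
        intro j h1 h2
        refine ⟨?_, by omega⟩
        rw [hQe]; simp only [Finset.mem_Icc]; omega
      exact forward (hbar - δ) hmem (hbar - δ) le_rfl t (by omega) a ha
    · intro t ht a ha
      have hmemf : ∀ j, 1 ≤ j → j ≤ hbar - 1 - p → p + j ∈ Q ∧ p + j < hbar := by
        intro j h1 h2
        refine ⟨?_, by omega⟩
        rw [hQe]; simp only [Finset.mem_union, Finset.mem_Icc]; omega
      have hbase := forward (hbar - 1 - p) hmemf (hbar - 1 - p) le_rfl
      have hmemb : ∀ k, 1 ≤ k → k ≤ p + 1 - δ → p - k ∈ Q := by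
        intro k h1 h2
        rw [hQe]; simp only [Finset.mem_union, Finset.mem_Icc]; omega
      exact backward (sbar + (hbar - 1 - p)) (p + 1 - δ) (by omega) (by omega) (by omega)
        hmemb hbase (p + 1 - δ) le_rfl t (by omega) a ha
    · intro t ht a ha
      have hmemb : ∀ k, 1 ≤ k → k ≤ hbar - δ → p - k ∈ Q := by
        intro k h1 h2
        rw [hQe]; simp only [Finset.mem_Icc]; omega
      exact backward sbar (hbar - δ) le_rfl (by omega) (by omega) hmemb
        (fun t ht => hdown t ht) (hbar - δ) le_rfl t (by omega) a ha
  intro y hy a ha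
  obtain ⟨t, ht, hmod⟩ := exists_offset L p y hL0 hy
  rw [← hmod]
  exact all t ht a ha
end

section
/- Fix p ∈ {0,…,h̄−1}, let S = S_{⌊p/(h̄−δ+1)⌋} be the group of host racks containing i_p, assume u − v + 1 ≤ b ≤ u and d̄ + 1 ≤ n̄ − h̄, and let R' ⊆ {0,…,n̄−1}∖F with |R'| = d̄ + 1. Let c and c' be two codewords such that H_{i_p,j}(a,m)[c] = H_{i_p,j}(a,m)[c'] for every j ∈ R', every m ∈ {u−v,…,b−1}, and every a ∈ 𝔽₂^{n̄} with a|_S ∈ V₀. Then for every m ∈ {u−v,…,b−1} and every a ∈ 𝔽₂^{n̄} with a|_S ∈ V₀: (i) ∑_{g=0}^{u−1} θ^{g·m}·c(i_p·u+g, a) = ∑_{g=0}^{u−1} θ^{g·m}·c'(i_p·u+g, a) and ∑_{g=0}^{u−1} θ^{g·m}·c(i_p·u+g, a+e_{i_p}) = ∑_{g=0}^{u−1} θ^{g·m}·c'(i_p·u+g, a+e_{i_p}); and (ii) H_{i_p,i}(a,m)[c] = H_{i_p,i}(a,m)[c'] for every i ∈ F∖{i_p}. -/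
/-!
Work with the difference `D = c - c'`, again a codeword. Since `θ^u = 1`, the parity check of
`D` at exponent `t = m + s u` only sees the rack sums `∑_g θ^{g m} D(i u + g, a)`. Adding the checks
at `a` and `a + e_{i_p}` for `s = 0, 1, …` gives a Vandermonde system in the distinct points
`λ_{i,j}^u`: rack `i ≠ i_p` contributes `H_{i_p,i}(a,m)[D]` at `λ_{i,a_i}`, rack `i_p` contributes
its two rack sums at `λ_{i_p,0}` and `λ_{i_p,1}`, and the helper racks contribute nothing. The
`n̄ − |R'| + 1` remaining unknowns do not outnumber the available checks (this is where `m < u` and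
`v < u` enter), so they all vanish.
-/

/-- Flip the `i`-th coordinate of a binary vector (the paper's `a + e_i`). -/
def flipCoord (a : ℕ → ZMod 2) (i : ℕ) : ℕ → ZMod 2 :=
  Function.update a i (a i + 1)

/-- The combined symbol `H_{i',j'}(a,m)[c]` of the second construction:
`∑_{g=0}^{u−1} θ^{g·m}·c(j'·u+g, a) + ∑_{g=0}^{u−1} θ^{g·m}·c(j'·u+g, a+e_{i'})`. -/
def Hval2 {𝔽 : Type*} [Field 𝔽] (θ : 𝔽) (u i' j' m : ℕ)
    (c : ℕ → (ℕ → ZMod 2) → 𝔽) (a : ℕ → ZMod 2) : 𝔽 :=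
  (∑ g ∈ Finset.range u, θ ^ (g * m) * c (j' * u + g) a)
    + ∑ g ∈ Finset.range u, θ ^ (g * m) * c (j' * u + g) (flipCoord a i')

open Finset

theorem Finset.eq_zero_of_forall_sum_pow_mul_eq_zero {ι R : Type*} [CommRing R] [IsDomain R]
    {E : Finset ι} {x w : ι → R} (hx : Set.InjOn x E)
    (h : ∀ s < #E, ∑ i ∈ E, x i ^ s * w i = 0) : ∀ i ∈ E, w i = 0 := by
  set e := E.equivFin
  have hw := Matrix.eq_zero_of_forall_pow_sum_mul_pow_eq_zero
    (f := fun k => x (e.symm k)) (v := fun k => w (e.symm k))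
    (fun k l hkl => e.symm.injective (Subtype.ext (hx (e.symm k).2 (e.symm l).2 hkl)))
    (fun s => by
      rw [← h s s.2, ← sum_coe_sort E, ← e.symm.sum_comp]
      exact sum_congr rfl fun k _ => mul_comm _ _)
  intro i hi
  simpa using congrFun hw (e ⟨i, hi⟩)

lemma flipCoord_self (a : ℕ → ZMod 2) (i : ℕ) : flipCoord a i i = a i + 1 :=
  Function.update_self ..

lemma flipCoord_of_ne {a : ℕ → ZMod 2} {i j : ℕ} (h : j ≠ i) : flipCoord a i j = a j :=
  Function.update_of_ne h ..

lemma ZMod.two_add_one_ne_self (x : ZMod 2) : x + 1 ≠ x := by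
  revert x; decide

lemma ZMod.two_eq_or_eq_add_one (x y : ZMod 2) : x = y ∨ x = y + 1 := by
  revert x y; decide

section Download

variable {𝔽 : Type*} [Field 𝔽]

def rackSum (θ : 𝔽) (u m : ℕ) (c : ℕ → (ℕ → ZMod 2) → 𝔽) (i : ℕ) (a : ℕ → ZMod 2) : 𝔽 :=
  ∑ g ∈ range u, θ ^ (g * m) * c (i * u + g) a

lemma rackSum_sub (θ : 𝔽) (u m : ℕ) (c c' : ℕ → (ℕ → ZMod 2) → 𝔽) (i : ℕ)
    (a : ℕ → ZMod 2) :
    rackSum θ u m (c - c') i a = rackSum θ u m c i a - rackSum θ u m c' i a := by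
  simp only [rackSum, Pi.sub_apply, mul_sub, sum_sub_distrib]

lemma rackSum_add_mul_of_pow_eq_one {θ : 𝔽} {u : ℕ} (hθ : θ ^ u = 1) (m s : ℕ)
    (c : ℕ → (ℕ → ZMod 2) → 𝔽) (i : ℕ) (a : ℕ → ZMod 2) :
    rackSum θ u (m + s * u) c i a = rackSum θ u m c i a := by
  refine sum_congr rfl fun g _ => ?_
  rw [show g * (m + s * u) = g * m + u * (g * s) by ring, pow_add, pow_mul θ u, hθ, one_pow,
    mul_one]

lemma Hval2_eq_rackSum_add (θ : 𝔽) (u i' j m : ℕ) (c : ℕ → (ℕ → ZMod 2) → 𝔽)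
    (a : ℕ → ZMod 2) :
    Hval2 θ u i' j m c a = rackSum θ u m c j a + rackSum θ u m c j (flipCoord a i') :=
  rfl

lemma Hval2_sub (θ : 𝔽) (u i' j m : ℕ) (c c' : ℕ → (ℕ → ZMod 2) → 𝔽) (a : ℕ → ZMod 2) :
    Hval2 θ u i' j m (c - c') a = Hval2 θ u i' j m c a - Hval2 θ u i' j m c' a := by
  simp only [Hval2_eq_rackSum_add, rackSum_sub]
  ring

/-- The paper's `λ_{i,j} = ξ^{2i+j}`. -/
def evalPoint (ξ : 𝔽) (x : ℕ × ZMod 2) : 𝔽 :=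
  ξ ^ (2 * x.1 + x.2.val)

lemma evalPoint_pow_injOn {ξ : 𝔽} {u N : ℕ} (hu : 0 < u) (hN : 2 * N * u ≤ orderOf ξ) :
    Set.InjOn (fun x => evalPoint ξ x ^ u) (range N ×ˢ univ : Finset (ℕ × ZMod 2)) := by
  have hlt : ∀ x ∈ (range N ×ˢ univ : Finset (ℕ × ZMod 2)),
      (2 * x.1 + x.2.val) * u < orderOf ξ := fun x hx => by
    have h1 : x.1 < N := mem_range.mp (mem_product.mp hx).1
    have h2 : x.2.val < 2 := x.2.val_lt
    have : (2 * x.1 + x.2.val + 1) * u ≤ 2 * N * u := Nat.mul_le_mul_right u (by omega)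
    nlinarith
  rintro ⟨i, β⟩ hx ⟨j, γ⟩ hy hxy
  simp only [evalPoint, ← pow_mul] at hxy
  have hexp := Nat.eq_of_mul_eq_mul_right hu
    (pow_injOn_Iio_orderOf (Set.mem_Iio.mpr (hlt _ hx)) (Set.mem_Iio.mpr (hlt _ hy)) hxy)
  dsimp only at hexp
  have hβ := β.val_lt
  have hγ := γ.val_lt
  have hij : i = j := by omega
  have hval : β.val = γ.val := by omega
  rw [hij, ZMod.val_injective _ hval]

def IsCodeword (ξ θ : 𝔽) (u nbar r : ℕ) (c : ℕ → (ℕ → ZMod 2) → 𝔽) : Prop :=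
  ∀ t < r, ∀ a : ℕ → ZMod 2, ∑ i ∈ range nbar, evalPoint ξ (i, a i) ^ t * rackSum θ u t c i a = 0

lemma isCodeword_iff (ξ θ : 𝔽) (u nbar r : ℕ) (c : ℕ → (ℕ → ZMod 2) → 𝔽) :
    IsCodeword ξ θ u nbar r c ↔ ∀ t < r, ∀ a : ℕ → ZMod 2,
      ∑ i ∈ range nbar, ∑ g ∈ range u,
        θ ^ (g * t) * (ξ ^ (2 * i + (a i).val)) ^ t * c (i * u + g) a = 0 := by
  have h : ∀ t a, ∑ i ∈ range nbar, evalPoint ξ (i, a i) ^ t * rackSum θ u t c i a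
      = ∑ i ∈ range nbar, ∑ g ∈ range u,
        θ ^ (g * t) * (ξ ^ (2 * i + (a i).val)) ^ t * c (i * u + g) a := fun t a => by
    simp only [evalPoint, rackSum, mul_sum]
    exact sum_congr rfl fun i _ => sum_congr rfl fun g _ => by ring
  simp only [IsCodeword, h]

lemma IsCodeword.sub {ξ θ : 𝔽} {u nbar r : ℕ} {c c' : ℕ → (ℕ → ZMod 2) → 𝔽}
    (hc : IsCodeword ξ θ u nbar r c) (hc' : IsCodeword ξ θ u nbar r c') :
    IsCodeword ξ θ u nbar r (c - c') := fun t ht a => by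
  simp only [rackSum_sub, mul_sub, sum_sub_distrib, hc t ht a, hc' t ht a, sub_zero]

def pairWeight {β : Type*} [DecidableEq β] (a a' : ℕ → β) (f f' : ℕ → 𝔽) (x : ℕ × β) : 𝔽 :=
  (if a x.1 = x.2 then f x.1 else 0) + (if a' x.1 = x.2 then f' x.1 else 0)

lemma sum_add_sum_eq_sum_product_pairWeight {β : Type*} [DecidableEq β] [Fintype β]
    (a a' : ℕ → β) (f f' : ℕ → 𝔽) (S : Finset ℕ) (φ : ℕ × β → 𝔽) :
    ∑ i ∈ S, φ (i, a i) * f i + ∑ i ∈ S, φ (i, a' i) * f' i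
      = ∑ x ∈ S ×ˢ univ, φ x * pairWeight a a' f f' x := by
  rw [sum_product, ← sum_add_distrib]
  refine sum_congr rfl fun i _ => ?_
  simp [pairWeight, mul_add, sum_add_distrib, mul_ite]

variable {ξ θ : 𝔽} {u nbar r m i i₀ : ℕ} {R : Finset ℕ} {D : ℕ → (ℕ → ZMod 2) → 𝔽}
  {a : ℕ → ZMod 2}

def flipWeight (θ : 𝔽) (u m : ℕ) (D : ℕ → (ℕ → ZMod 2) → 𝔽) (i₀ : ℕ) (a : ℕ → ZMod 2) :
    ℕ × ZMod 2 → 𝔽 :=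
  pairWeight a (flipCoord a i₀) (fun i => rackSum θ u m D i a)
    (fun i => rackSum θ u m D i (flipCoord a i₀))

lemma flipWeight_self : flipWeight θ u m D i₀ a (i₀, a i₀) = rackSum θ u m D i₀ a := by
  simp [flipWeight, pairWeight, flipCoord_self]

lemma flipWeight_add_one :
    flipWeight θ u m D i₀ a (i₀, a i₀ + 1) = rackSum θ u m D i₀ (flipCoord a i₀) := by
  simp [flipWeight, pairWeight, flipCoord_self, (ZMod.two_add_one_ne_self _).symm]

lemma flipWeight_of_ne (hi : i ≠ i₀) : flipWeight θ u m D i₀ a (i, a i) = Hval2 θ u i₀ i m D a := by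
  simp [flipWeight, pairWeight, flipCoord_of_ne hi, Hval2_eq_rackSum_add]

lemma flipWeight_of_ne_of_ne (hi : i ≠ i₀) {β : ZMod 2} (hβ : a i ≠ β) :
    flipWeight θ u m D i₀ a (i, β) = 0 := by
  simp [flipWeight, pairWeight, flipCoord_of_ne hi, hβ]

lemma IsCodeword.sum_flipWeight_eq_zero (hD : IsCodeword ξ θ u nbar r D) (hθ : θ ^ u = 1)
    {s : ℕ} (hs : m + s * u < r) :
    ∑ x ∈ range nbar ×ˢ univ, evalPoint ξ x ^ (m + s * u) * flipWeight θ u m D i₀ a x = 0 := by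
  rw [flipWeight, ← sum_add_sum_eq_sum_product_pairWeight]
  have h₁ := hD _ hs a
  have h₂ := hD _ hs (flipCoord a i₀)
  simp only [rackSum_add_mul_of_pow_eq_one hθ] at h₁ h₂
  rw [h₁, h₂, add_zero]

/-- The points `λ_x` that can carry a nonzero `flipWeight` once the helper racks `R` are
known to contribute nothing. -/
def unknownPoints (nbar i₀ : ℕ) (R : Finset ℕ) (a : ℕ → ZMod 2) : Finset (ℕ × ZMod 2) :=
  insert (i₀, a i₀ + 1) ((range nbar \ R).image fun i => (i, a i))

lemma mk_mem_unknownPoints (hi : i < nbar) (hiR : i ∉ R) : (i, a i) ∈ unknownPoints nbar i₀ R a :=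
  mem_insert_of_mem (mem_image_of_mem _ (mem_sdiff.mpr ⟨mem_range.mpr hi, hiR⟩))

lemma unknownPoints_subset (hi₀ : i₀ < nbar) : unknownPoints nbar i₀ R a ⊆ range nbar ×ˢ univ := by
  refine insert_subset (mem_product.mpr ⟨mem_range.mpr hi₀, mem_univ _⟩) fun x hx => ?_
  obtain ⟨i, hi, rfl⟩ := mem_image.mp hx
  exact mem_product.mpr ⟨(mem_sdiff.mp hi).1, mem_univ _⟩

lemma card_unknownPoints (hR : R ⊆ range nbar) : #(unknownPoints nbar i₀ R a) = nbar - #R + 1 := by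
  rw [unknownPoints, card_insert_of_notMem,
    card_image_of_injective _ fun i j h => (Prod.mk.inj h).1, card_sdiff_of_subset hR, card_range]
  intro h
  obtain ⟨i, -, hi⟩ := mem_image.mp h
  obtain ⟨rfl, h⟩ := Prod.mk.inj hi
  exact ZMod.two_add_one_ne_self _ h.symm

lemma flipWeight_eq_zero_of_notMem_unknownPoints (hi₀ : i₀ < nbar) (hi₀R : i₀ ∉ R)
    (hH : ∀ j ∈ R, Hval2 θ u i₀ j m D a = 0) {x : ℕ × ZMod 2} (hx : x ∈ range nbar ×ˢ univ)
    (hxE : x ∉ unknownPoints nbar i₀ R a) : flipWeight θ u m D i₀ a x = 0 := by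
  obtain ⟨i, β⟩ := x
  have hi : i < nbar := mem_range.mp (mem_product.mp hx).1
  have hne : i ≠ i₀ := by
    rintro rfl
    rcases ZMod.two_eq_or_eq_add_one β (a i) with rfl | rfl
    · exact hxE (mk_mem_unknownPoints hi₀ hi₀R)
    · exact hxE (mem_insert_self _ _)
  by_cases hβ : a i = β
  · subst hβ
    have hiR : i ∈ R := by
      by_contra hiR
      exact hxE (mk_mem_unknownPoints hi hiR)
    rw [flipWeight_of_ne hne, hH i hiR]
  · exact flipWeight_of_ne_of_ne hne hβ

theorem IsCodeword.flipWeight_eq_zero (hD : IsCodeword ξ θ u nbar r D) (hθ : θ ^ u = 1)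
    (hξ : ξ ≠ 0)
    (hinj : Set.InjOn (fun x => evalPoint ξ x ^ u) (range nbar ×ˢ univ : Finset (ℕ × ZMod 2)))
    (hi₀ : i₀ < nbar) (hR : R ⊆ range nbar) (hi₀R : i₀ ∉ R) (hm : m + (nbar - #R) * u < r)
    (hH : ∀ j ∈ R, Hval2 θ u i₀ j m D a = 0) :
    ∀ x ∈ unknownPoints nbar i₀ R a, flipWeight θ u m D i₀ a x = 0 := by
  have hsub := unknownPoints_subset (R := R) (a := a) hi₀
  have hvan := eq_zero_of_forall_sum_pow_mul_eq_zero
    (w := fun x => evalPoint ξ x ^ m * flipWeight θ u m D i₀ a x)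
    (hinj.mono (by exact_mod_cast hsub)) fun s hs => by
      rw [card_unknownPoints hR] at hs
      have hsm : m + s * u < r := lt_of_le_of_lt (by gcongr; omega) hm
      rw [← hD.sum_flipWeight_eq_zero hθ hsm, ← sum_subset hsub fun x hx hxE => by
        rw [flipWeight_eq_zero_of_notMem_unknownPoints hi₀ hi₀R hH hx hxE, mul_zero]]
      refine sum_congr rfl fun x _ => ?_
      rw [← mul_assoc, ← pow_mul, ← pow_add, add_comm, mul_comm u s]
  intro x hx
  exact (mul_eq_zero.mp (hvan x hx)).resolve_left (pow_ne_zero _ (pow_ne_zero _ hξ))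

theorem IsCodeword.rackSum_eq_zero_and_Hval2_eq_zero (hD : IsCodeword ξ θ u nbar r D)
    (hθ : θ ^ u = 1) (hξ : ξ ≠ 0)
    (hinj : Set.InjOn (fun x => evalPoint ξ x ^ u) (range nbar ×ˢ univ : Finset (ℕ × ZMod 2)))
    (hi₀ : i₀ < nbar) (hR : R ⊆ range nbar) (hi₀R : i₀ ∉ R) (hm : m + (nbar - #R) * u < r)
    (hH : ∀ j ∈ R, Hval2 θ u i₀ j m D a = 0) :
    rackSum θ u m D i₀ a = 0 ∧ rackSum θ u m D i₀ (flipCoord a i₀) = 0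
      ∧ ∀ i < nbar, i ≠ i₀ → i ∉ R → Hval2 θ u i₀ i m D a = 0 := by
  have hW := hD.flipWeight_eq_zero hθ hξ hinj hi₀ hR hi₀R hm hH
  refine ⟨?_, ?_, fun i hi hne hiR => ?_⟩
  · rw [← flipWeight_self]
    exact hW _ (mk_mem_unknownPoints hi₀ hi₀R)
  · rw [← flipWeight_add_one]
    exact hW _ (mem_insert_self _ _)
  · rw [← flipWeight_of_ne hne]
    exact hW _ (mk_mem_unknownPoints hi hiR)

end Download

theorem stmt16_general {𝔽 : Type*} [Field 𝔽] [Fintype 𝔽]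
    (nbar u kbar hbar dbar δ v b : ℕ)
    (hu : 0 < u)
    (hv : v < u) (hb2 : b ≤ u)
    (hdbar : dbar = kbar + 1)
    (k n r : ℕ)
    (hk : k = kbar * u + v) (hn : n = nbar * u) (hr : r = n - k)
    (hcard : 2 * n + 1 ≤ Fintype.card 𝔽)
    (ξ θ : 𝔽) (hξ : orderOf ξ = Fintype.card 𝔽 - 1) (hθ : orderOf θ = u)
    -- the host racks `i₀ < i₁ < … < i_{hbar−1}`, given by `iF 0, …, iF (hbar−1)`
    (iF : ℕ → ℕ) (hiF : StrictMonoOn iF (Set.Iio hbar)) (hiFn : ∀ q < hbar, iF q < nbar)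
    -- the helper racks
    (R : Finset ℕ) (hR : R.card = dbar + 1) (hRn : ∀ j ∈ R, j < nbar)
    (hRF : ∀ j ∈ R, ∀ q < hbar, j ≠ iF q)
    (V₀ : Set (Fin (hbar - δ + 1) → ZMod 2))
    -- two codewords of the MDS array code
    (c c' : ℕ → (ℕ → ZMod 2) → 𝔽)
    (hc : ∀ t < r, ∀ a : ℕ → ZMod 2,
      ∑ i ∈ Finset.range nbar, ∑ g ∈ Finset.range u,
        θ ^ (g * t) * (ξ ^ (2 * i + (a i).val)) ^ t * c (i * u + g) a = 0)
    (hc' : ∀ t < r, ∀ a : ℕ → ZMod 2,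
      ∑ i ∈ Finset.range nbar, ∑ g ∈ Finset.range u,
        θ ^ (g * t) * (ξ ^ (2 * i + (a i).val)) ^ t * c' (i * u + g) a = 0)
    (p : ℕ) (hp : p < hbar)
    -- the downloaded symbols agree
    (hH : ∀ j ∈ R, ∀ m, u - v ≤ m → m < b → ∀ a : ℕ → ZMod 2,
      (fun t : Fin (hbar - δ + 1) =>
        a (iF (p / (hbar - δ + 1) * (hbar - δ + 1) + (t : ℕ)))) ∈ V₀ →
      Hval2 θ u (iF p) j m c a = Hval2 θ u (iF p) j m c' a) :
    (∀ m, u - v ≤ m → m < b → ∀ a : ℕ → ZMod 2,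
      (fun t : Fin (hbar - δ + 1) =>
        a (iF (p / (hbar - δ + 1) * (hbar - δ + 1) + (t : ℕ)))) ∈ V₀ →
      (∑ g ∈ Finset.range u, θ ^ (g * m) * c (iF p * u + g) a
          = ∑ g ∈ Finset.range u, θ ^ (g * m) * c' (iF p * u + g) a)
      ∧ (∑ g ∈ Finset.range u, θ ^ (g * m) * c (iF p * u + g) (flipCoord a (iF p))
          = ∑ g ∈ Finset.range u, θ ^ (g * m) * c' (iF p * u + g) (flipCoord a (iF p))))
    ∧ (∀ q < hbar, q ≠ p → ∀ m, u - v ≤ m → m < b → ∀ a : ℕ → ZMod 2,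
      (fun t : Fin (hbar - δ + 1) =>
        a (iF (p / (hbar - δ + 1) * (hbar - δ + 1) + (t : ℕ)))) ∈ V₀ →
      Hval2 θ u (iF p) (iF q) m c a = Hval2 θ u (iF p) (iF q) m c' a) := by
  have hθu : θ ^ u = 1 := hθ ▸ pow_orderOf_eq_one θ
  have hD : IsCodeword ξ θ u nbar r (c - c') :=
    ((isCodeword_iff ..).mpr hc).sub ((isCodeword_iff ..).mpr hc')
  have hip : iF p < nbar := hiFn p hp
  have hpR : iF p ∉ R := fun h => hRF _ h p hp rfl
  have hRsub : R ⊆ (range nbar).erase (iF p) := fun j hj =>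
    mem_erase.mpr ⟨hRF j hj p hp, mem_range.mpr (hRn j hj)⟩
  have hRcard : #R ≤ nbar - 1 := by
    simpa [card_erase_of_mem (mem_range.mpr hip)] using card_le_card hRsub
  have horder : 2 * nbar * u ≤ orderOf ξ := by
    rw [hξ, mul_assoc, ← hn]
    omega
  have hξ0 : ξ ≠ 0 :=
    (orderOf_pos_iff.mp ((Nat.mul_pos (by omega) hu).trans_le horder)).isUnit.ne_zero
  have hinj := evalPoint_pow_injOn hu horder
  have hm : ∀ m < b, m + (nbar - #R) * u < r := fun m hm => by
    obtain ⟨N, hN⟩ : ∃ N, nbar = N + #R + 1 := ⟨nbar - #R - 1, by omega⟩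
    rw [hr, hn, hk, show nbar - #R = N + 1 by omega, hN, hR, hdbar]
    simp only [add_mul, one_mul]
    omega
  have key := fun m (hm₁ : u - v ≤ m) (hm₂ : m < b) a ha =>
    hD.rackSum_eq_zero_and_Hval2_eq_zero hθu hξ0 hinj hip (hRsub.trans (erase_subset _ _)) hpR
      (hm m hm₂) fun j hj => by rw [Hval2_sub, hH j hj m hm₁ hm₂ a ha, sub_self]
  refine ⟨fun m hm₁ hm₂ a ha => ?_, fun q hq hqp m hm₁ hm₂ a ha => ?_⟩
  · obtain ⟨h₁, h₂, -⟩ := key m hm₁ hm₂ a ha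
    rw [rackSum_sub, sub_eq_zero] at h₁ h₂
    exact ⟨h₁, h₂⟩
  · have hqp' : iF q ≠ iF p := fun h => hqp (hiF.injOn hq hp h)
    have h := (key m hm₁ hm₂ a ha).2.2 (iF q) (hiFn q hq) hqp' fun h => hRF _ h q hq rfl
    rwa [Hval2_sub, sub_eq_zero] at h

/-- **Lemma 5(2) of the paper** (download phase of the second construction,
`dbar = kbar + 1`, regime `u − v + 1 ≤ b ≤ u`, using an enlarged set `R'` of
`dbar + 1` helper racks, here named `R`): if two codewords `c, c'` give the same
downloaded symbols `H_{i_p,j}(a,m)` for all `j ∈ R'`, all `m ∈ {u−v, …, b−1}` and all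
`a` whose restriction to the group `S = S_{⌊p/(hbar−δ+1)⌋}` of host racks containing
`i_p` (in increasing order) lies in the Hamming code `V₀`, then they agree on (i) the
combinations `∑_g θ^{g·m}·c(i_p·u+g, a)` and `∑_g θ^{g·m}·c(i_p·u+g, a+e_{i_p})`, and
(ii) the symbols `H_{i_p,i}(a,m)` for every other host rack `i ∈ F∖{i_p}`, for all
such `a` and all `m ∈ {u−v, …, b−1}`. -/
theorem stmt16 {𝔽 : Type*} [Field 𝔽] [Fintype 𝔽]
    (nbar u kbar hbar dbar δ v b mbar : ℕ)
    (hnbar : 0 < nbar) (hu : 0 < u) (hkbar : 0 < kbar) (hhbar : 0 < hbar)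
    (hδ1 : 1 ≤ δ) (hδ2 : δ ≤ hbar - 1)
    (hv : v < u) (hb1 : u - v + 1 ≤ b) (hb2 : b ≤ u)
    (hmbar : hbar - δ + 2 = 2 ^ mbar) (hdvdh : (hbar - δ + 1) ∣ hbar)
    (hdbar : dbar = kbar + 1) (hd2 : dbar + 1 ≤ nbar - hbar) (hhn : hbar ≤ nbar)
    (k n r : ℕ)
    (hk : k = kbar * u + v) (hn : n = nbar * u) (hr : r = n - k)
    (hcard : 2 * n + 1 ≤ Fintype.card 𝔽) (hdvd : u ∣ Fintype.card 𝔽 - 1)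
    (ξ θ : 𝔽) (hξ : orderOf ξ = Fintype.card 𝔽 - 1) (hθ : orderOf θ = u)
    -- the host racks `i₀ < i₁ < … < i_{hbar−1}`, given by `iF 0, …, iF (hbar−1)`
    (iF : ℕ → ℕ) (hiF : StrictMonoOn iF (Set.Iio hbar)) (hiFn : ∀ q < hbar, iF q < nbar)
    -- the helper racks
    (R : Finset ℕ) (hR : R.card = dbar + 1) (hRn : ∀ j ∈ R, j < nbar)
    (hRF : ∀ j ∈ R, ∀ q < hbar, j ≠ iF q)
    -- the Hamming code `V₀ ⊆ 𝔽₂^{hbar−δ+1}`: kernel of a matrix whose columns are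
    -- the distinct nonzero vectors of `𝔽₂^{mbar}`
    (Hm : Matrix (Fin mbar) (Fin (hbar - δ + 1)) (ZMod 2))
    (hHminj : Function.Injective fun j i => Hm i j)
    (hHmnz : ∀ j, (fun i => Hm i j) ≠ 0)
    (V₀ : Set (Fin (hbar - δ + 1) → ZMod 2)) (hV₀ : V₀ = {f | Hm.mulVec f = 0})
    -- two codewords of the MDS array code
    (c c' : ℕ → (ℕ → ZMod 2) → 𝔽)
    (hc : ∀ t < r, ∀ a : ℕ → ZMod 2,
      ∑ i ∈ Finset.range nbar, ∑ g ∈ Finset.range u,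
        θ ^ (g * t) * (ξ ^ (2 * i + (a i).val)) ^ t * c (i * u + g) a = 0)
    (hc' : ∀ t < r, ∀ a : ℕ → ZMod 2,
      ∑ i ∈ Finset.range nbar, ∑ g ∈ Finset.range u,
        θ ^ (g * t) * (ξ ^ (2 * i + (a i).val)) ^ t * c' (i * u + g) a = 0)
    (p : ℕ) (hp : p < hbar)
    -- the downloaded symbols agree
    (hH : ∀ j ∈ R, ∀ m, u - v ≤ m → m < b → ∀ a : ℕ → ZMod 2,
      (fun t : Fin (hbar - δ + 1) =>
        a (iF (p / (hbar - δ + 1) * (hbar - δ + 1) + (t : ℕ)))) ∈ V₀ →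
      Hval2 θ u (iF p) j m c a = Hval2 θ u (iF p) j m c' a) :
    (∀ m, u - v ≤ m → m < b → ∀ a : ℕ → ZMod 2,
      (fun t : Fin (hbar - δ + 1) =>
        a (iF (p / (hbar - δ + 1) * (hbar - δ + 1) + (t : ℕ)))) ∈ V₀ →
      (∑ g ∈ Finset.range u, θ ^ (g * m) * c (iF p * u + g) a
          = ∑ g ∈ Finset.range u, θ ^ (g * m) * c' (iF p * u + g) a)
      ∧ (∑ g ∈ Finset.range u, θ ^ (g * m) * c (iF p * u + g) (flipCoord a (iF p))
          = ∑ g ∈ Finset.range u, θ ^ (g * m) * c' (iF p * u + g) (flipCoord a (iF p))))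
    ∧ (∀ q < hbar, q ≠ p → ∀ m, u - v ≤ m → m < b → ∀ a : ℕ → ZMod 2,
      (fun t : Fin (hbar - δ + 1) =>
        a (iF (p / (hbar - δ + 1) * (hbar - δ + 1) + (t : ℕ)))) ∈ V₀ →
      Hval2 θ u (iF p) (iF q) m c a = Hval2 θ u (iF p) (iF q) m c' a) :=
  stmt16_general nbar u kbar hbar dbar δ v b hu hv hb2 hdbar k n r hk hn hr hcard ξ θ hξ hθ iF hiF
    hiFn R hR hRn hRF V₀ c c' hc hc' p hp hH
end
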